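/- For every real M > −1/(3√3), the function H(t) = W_M(t)^{−1/2} is differentiable on (t₊(M), ∞) and satisfies there the identity (2/t)·(H'(t)/H(t)) = (H(t)² + 1)/t² − 3·H(t)². (This is the ODE reduction of the Einstein equations Ric(g) = 3g for the SO(3)×U(1)-symmetric Lorentzian metrics −H² dt² + t² dσ₂² + a² W dσ₁².) -/

import Mathlib

/-! Since `tp` is the greatest root of the cubic `s³ - s - 2M`, which is eventually positive, the
intermediate value theorem makes the cubic positive on `(tp, ∞)`; and `M > -1/(3√3)` makes it
negative at `1/√3`, so `tp ≥ 1/√3 > 0`. Hence `W = (t³ - t - 2M)/t > 0` for `t > tp`, and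
`H = W^{-1/2}` is differentiable with `H'/H = -W'/(2W)`. The ODE then reduces to the identity
`-(2t + 2M/t²)/(tW) = (1 + W - 3t²)/(t²W)`, which is `W = t² - 1 - 2M/t` rearranged. -/

open Real

section Cubic

variable {k : ℝ}

lemma exists_cubic_root_ge_of_nonpos {a : ℝ} (ha : a ^ 3 - a - k ≤ 0) :
    ∃ c, a ≤ c ∧ c ^ 3 - c - k = 0 := by
  set S := |a| + |k| + 2
  have haS : a ≤ S := by linarith [le_abs_self a, abs_nonneg k]
  have hS : 0 ≤ S ^ 3 - S - k := by
    have h1 : |k| + 1 ≤ S - 1 := by linarith [abs_nonneg a]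
    have h2 : 3 ≤ S + 1 := by linarith [abs_nonneg a, abs_nonneg k]
    nlinarith [le_abs_self k, mul_le_mul h1 h2 (by positivity) (by linarith [abs_nonneg k]),
      abs_nonneg k]
  obtain ⟨c, hc, hc0⟩ := intermediate_value_Icc haS
    (f := fun s : ℝ => s ^ 3 - s - k) (by fun_prop) ⟨ha, hS⟩
  exact ⟨c, hc.1, hc0⟩

lemma cubic_pos_of_isGreatest_roots_lt {tp t : ℝ}
    (htp : IsGreatest {s : ℝ | s ^ 3 - s - k = 0} tp) (ht : tp < t) :
    0 < t ^ 3 - t - k := by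
  by_contra! h
  obtain ⟨c, htc, hc⟩ := exists_cubic_root_ge_of_nonpos h
  exact absurd (htp.2 hc) (not_le.2 (ht.trans_le htc))

lemma inv_sqrt_three_le_of_isGreatest_roots {M tp : ℝ} (hM : -1 / (3 * √3) < M)
    (htp : IsGreatest {s : ℝ | s ^ 3 - s - 2 * M = 0} tp) :
    1 / √3 ≤ tp := by
  have hval : (1 / √3) ^ 3 - 1 / √3 = 2 * (-1 / (3 * √3)) := by
    have : √3 ^ 3 = 3 * √3 := by rw [pow_succ, sq_sqrt (by norm_num)]
    rw [div_pow, one_pow, this]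
    field_simp
    ring
  obtain ⟨c, hc, hc0⟩ := exists_cubic_root_ge_of_nonpos (a := 1 / √3) (k := 2 * M)
    (by rw [hval]; linarith)
  exact hc.trans (htp.2 hc0)

end Cubic

lemma hasDerivAt_sq_sub_one_sub_div (M : ℝ) {t : ℝ} (ht : t ≠ 0) :
    HasDerivAt (fun s : ℝ => s ^ 2 - 1 - 2 * M / s) (2 * t + 2 * M / t ^ 2) t := by
  have h := ((hasDerivAt_pow 2 t).sub_const 1).fun_sub ((hasDerivAt_inv ht).const_mul (2 * M))
  simp only [div_eq_mul_inv]
  exact h.congr_deriv (by push_cast; ring)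

lemma HasDerivAt.one_div_sqrt {f : ℝ → ℝ} {f' x : ℝ} (hf : HasDerivAt f f' x) (hx : 0 < f x) :
    HasDerivAt (fun s => 1 / √(f s)) (-f' / (2 * f x * √(f x))) x := by
  have hs : 0 < √(f x) := sqrt_pos.2 hx
  have h := (hf.sqrt hx.ne').fun_inv hs.ne'
  rw [sq_sqrt hx.le] at h
  simp only [one_div]
  exact h.congr_deriv (by field_simp)

lemma one_div_sqrt_sq {w : ℝ} (hw : 0 ≤ w) : (1 / √w) ^ 2 = 1 / w := by
  rw [div_pow, one_pow, sq_sqrt hw]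

lemma sq_sub_one_sub_div_einstein_identity {M t w : ℝ} (ht : t ≠ 0) (hw : 0 < w)
    (hwt : w = t ^ 2 - 1 - 2 * M / t) :
    2 / t * (-(2 * t + 2 * M / t ^ 2) / (2 * w * √w) / (1 / √w)) =
      (1 / w + 1) / t ^ 2 - 3 * (1 / w) := by
  have h2M : 2 * M / t ^ 2 = (t ^ 2 - 1 - w) / t := by rw [hwt]; field_simp; ring
  rw [h2M]
  field_simp
  ring

theorem wick_rotated_einstein_ode (M : ℝ) (hM : -1 / (3 * Real.sqrt 3) < M)
    (tp : ℝ) (htp : IsGreatest {s : ℝ | s ^ 3 - s - 2 * M = 0} tp) :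
    ∀ t : ℝ, tp < t →
      DifferentiableAt ℝ (fun s : ℝ => 1 / Real.sqrt (s ^ 2 - 1 - 2 * M / s)) t ∧
      (2 / t) * (deriv (fun s : ℝ => 1 / Real.sqrt (s ^ 2 - 1 - 2 * M / s)) t /
          (1 / Real.sqrt (t ^ 2 - 1 - 2 * M / t))) =
        ((1 / Real.sqrt (t ^ 2 - 1 - 2 * M / t)) ^ 2 + 1) / t ^ 2 -
          3 * (1 / Real.sqrt (t ^ 2 - 1 - 2 * M / t)) ^ 2 := by
  intro t ht
  have htp0 : 0 < tp :=
    (by positivity : (0 : ℝ) < 1 / √3).trans_le (inv_sqrt_three_le_of_isGreatest_roots hM htp)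
  have ht0 : 0 < t := htp0.trans ht
  have hW : 0 < t ^ 2 - 1 - 2 * M / t := by
    have h : t ^ 2 - 1 - 2 * M / t = (t ^ 3 - t - 2 * M) / t := by field_simp
    rw [h]
    exact div_pos (cubic_pos_of_isGreatest_roots_lt htp ht) ht0
  have hH := (hasDerivAt_sq_sub_one_sub_div M ht0.ne').one_div_sqrt hW
  refine ⟨hH.differentiableAt, ?_⟩
  rw [hH.deriv, one_div_sqrt_sq hW.le]
  exact sq_sub_one_sub_div_einstein_identity ht0.ne' hW rfl
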